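/- There is a k-algebra automorphism g of B determined by g(a) = a and g(b) = b − a, and this automorphism satisfies g^p = id (so g generates an action of the cyclic group of order p on B by k-algebra automorphisms). -/
import Mathlib


noncomputable section

variable (k : Type*) [Field k]

/-- The generator `a` of the free algebra `k⟨a,b⟩`. -/
def aF : FreeAlgebra k (Fin 2) := FreeAlgebra.ι k 0

/-- The generator `b` of the free algebra `k⟨a,b⟩`. -/
def bF : FreeAlgebra k (Fin 2) := FreeAlgebra.ι k 1

/-- The defining relation `ba = ab + (1/2)a²` of `B`. -/
inductive BRel : FreeAlgebra k (Fin 2) → FreeAlgebra k (Fin 2) → Prop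
  | rel : BRel (bF k * aF k) (aF k * bF k + (2 : k)⁻¹ • aF k ^ 2)

/-- The algebra `B = k⟨a,b⟩/(ba − ab − (1/2)a²)`. -/
abbrev B := RingQuot (BRel k)

/-- The image of `a` in `B`. -/
def aB : B k := RingQuot.mkAlgHom k (BRel k) (aF k)

/-- The image of `b` in `B`. -/
def bB : B k := RingQuot.mkAlgHom k (BRel k) (bF k)

lemma rel_B : bB k * aB k = aB k * bB k + (2 : k)⁻¹ • aB k ^ 2 := by
  have := RingQuot.mkAlgHom_rel k (BRel.rel (k := k))
  simpa [aB, bB, map_mul, map_add, map_smul, map_pow] using this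

lemma algHom_ext {A : Type*} [Semiring A] [Algebra k A] {f₁ f₂ : B k →ₐ[k] A}
    (ha : f₁ (aB k) = f₂ (aB k)) (hb : f₁ (bB k) = f₂ (bB k)) : f₁ = f₂ := by
  apply RingQuot.ringQuot_ext'
  apply FreeAlgebra.hom_ext
  funext i
  fin_cases i
  · simpa [aB, aF] using ha
  · simpa [bB, bF] using hb

/-- The endomorphism of `B` sending `a ↦ a`, `b ↦ b + c a`. -/
def transHom (c : k) : B k →ₐ[k] B k :=
  RingQuot.liftAlgHom k (s := BRel k)
    ⟨FreeAlgebra.lift k ![aB k, bB k + c • aB k], by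
      rintro x y ⟨⟩
      simp only [map_mul, map_add, map_smul, map_pow, FreeAlgebra.lift_ι_apply, aF, bF,
        Matrix.cons_val_zero, Matrix.cons_val_one, Matrix.head_cons]
      rw [add_mul, rel_B, mul_add, smul_mul_assoc, mul_smul_comm, sq]
      ring_nf
      abel⟩

lemma transHom_a (c : k) : transHom k c (aB k) = aB k := by
  simp [transHom, aB, RingQuot.liftAlgHom_mkAlgHom_apply, aF]

lemma transHom_b (c : k) : transHom k c (bB k) = bB k + c • aB k := by
  simp [transHom, bB, RingQuot.liftAlgHom_mkAlgHom_apply, bF]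

/-- The automorphism `g` of `B` with `g(a) = a`, `g(b) = b − a`. -/
def gEquiv : B k ≃ₐ[k] B k :=
  AlgEquiv.ofAlgHom (transHom k (-1)) (transHom k 1)
    (algHom_ext k (by simp only [AlgHom.coe_comp, Function.comp_apply, AlgHom.coe_id, id_eq,
        transHom_a])
      (by simp only [AlgHom.coe_comp, Function.comp_apply, AlgHom.coe_id, id_eq, transHom_b,
        map_add, map_smul, transHom_a]; module))
    (algHom_ext k (by simp only [AlgHom.coe_comp, Function.comp_apply, AlgHom.coe_id, id_eq,
        transHom_a])
      (by simp only [AlgHom.coe_comp, Function.comp_apply, AlgHom.coe_id, id_eq, transHom_b,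
        map_add, map_smul, transHom_a]; module))

lemma gEquiv_a : gEquiv k (aB k) = aB k := transHom_a k (-1)

lemma gEquiv_b : gEquiv k (bB k) = bB k - aB k := by
  show transHom k (-1) (bB k) = _
  rw [transHom_b]; module

lemma equiv_ext {g₁ g₂ : B k ≃ₐ[k] B k} (ha : g₁ (aB k) = g₂ (aB k))
    (hb : g₁ (bB k) = g₂ (bB k)) : g₁ = g₂ := by
  have : (g₁ : B k →ₐ[k] B k) = g₂ := algHom_ext k ha hb
  exact AlgEquiv.ext fun x => AlgHom.congr_fun this x

lemma gEquiv_pow (n : ℕ) :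
    (gEquiv k ^ n) (aB k) = aB k ∧ (gEquiv k ^ n) (bB k) = bB k - n • aB k := by
  induction n with
  | zero => simp
  | succ n ih =>
    rw [pow_succ]
    constructor
    · rw [AlgEquiv.mul_apply, gEquiv_a, ih.1]
    · rw [AlgEquiv.mul_apply, gEquiv_b, map_sub, ih.1, ih.2, succ_nsmul]
      abel

/-- There is a `k`-algebra automorphism `g` of `B` determined by
`g(a) = a` and `g(b) = b − a`, and this automorphism satisfies `g^p = 1`
(so it generates an action of the cyclic group of order `p` on `B`). -/
theorem exists_automorphism_g_of_B (p : ℕ) [CharP k p] (hp : 2 < p) :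
    ∃ g : B k ≃ₐ[k] B k, g (aB k) = aB k ∧ g (bB k) = bB k - aB k ∧
      (∀ g' : B k ≃ₐ[k] B k, g' (aB k) = aB k → g' (bB k) = bB k - aB k → g' = g) ∧
      g ^ p = 1 := by
  refine ⟨gEquiv k, gEquiv_a k, gEquiv_b k, fun g' ha hb =>
    equiv_ext k (by rw [ha, gEquiv_a]) (by rw [hb, gEquiv_b]), ?_⟩
  have hpow := gEquiv_pow k p
  have hsmul : (p : ℕ) • aB k = 0 := by
    rw [← Nat.cast_smul_eq_nsmul k, CharP.cast_eq_zero k p, zero_smul]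
  apply equiv_ext k
  · rw [hpow.1]; rfl
  · rw [hpow.2, hsmul, sub_zero]; rfl

end
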